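/- Let m ≥ 2, σ > 1, H > 0, and let Q : (0,∞) → ℝ be a positive non-decreasing function with Q(t) = o(t²) as t → +∞ and liminf_{r→+∞} Q(r)·(log r)/r² < +∞. Let a, b : ℝ^m → ℝ be continuous with b(x) ≥ 1/Q(|x|) for |x| > 0, a_-(x) = max(−a(x), 0) bounded on ℝ^m, and a_-(x)/b(x) ≤ H on ℝ^m. Let f : ℝ → ℝ be continuous with liminf_{t→+∞} f(t)/t^σ > 0. If u ∈ C²(ℝ^m) is a non-negative function satisfying Δu(x) ≥ b(x) f(u(x)) + a(x) u(x) for all x ∈ ℝ^m, then sup_{ℝ^m} u < +∞. -/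

import Mathlib

/-!
Keller–Osserman barrier argument. On a ball `B(z, R)` the radial function
`w = T + B (1 - |y - z|² / R²) ^ (-q)` with `q = 2 / (σ - 1)` blows up at the boundary, and since
`q σ = q + 2` both `Δw` and `w ^ σ` grow like `(1 - |y - z|² / R²) ^ (-q - 2)`; hence `Δw ≤ k w ^ σ`
as soon as `k R² B ^ (σ - 1)` exceeds a constant depending only on `m` and `σ`. If `Δu ≥ k u ^ σ`
wherever `u ≥ T`, then at an interior maximum of `u - w` with `u > w` we would get
`k u ^ σ ≤ Δu ≤ Δw ≤ k w ^ σ`, which is absurd; so `u(z) ≤ w(z) = T + B`.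

Far out this is applied with `z = x`, `R = |x| / 2`, `B = 1`. Choose `T` with
`f(t) ≥ (c / 2) t ^ σ + H t` for `t ≥ T`, where `c > 0` comes from the liminf of `f(t) / t ^ σ`;
then `a ≥ -H b`, `b ≥ 1 / Q(|y|)` and the monotonicity of `Q` give `Δu ≥ k u ^ σ` on `B(x, |x| / 2)`
wherever `u ≥ T`, with `k = c / (2 Q(3|x| / 2))`. Since `Q(t) = o(t²)`, `k R² → ∞` as `|x| → ∞`, so
`u ≤ T + 1` outside a large ball, and `u` is bounded on that compact ball.
-/

open Filter Asymptotics

/-- The Laplacian on Euclidean space: the sum of the pure second partial derivatives. -/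
noncomputable def euclideanLaplacian {m : ℕ} (u : EuclideanSpace ℝ (Fin m) → ℝ)
    (x : EuclideanSpace ℝ (Fin m)) : ℝ :=
  ∑ i, fderiv ℝ (fun y => fderiv ℝ u y (EuclideanSpace.single i 1)) x (EuclideanSpace.single i 1)

open Topology

theorem IsLocalMax.deriv_deriv_nonpos {f : ℝ → ℝ} {x₀ : ℝ} (hmax : IsLocalMax f x₀)
    (hc : ContinuousAt f x₀) : deriv (deriv f) x₀ ≤ 0 := by
  by_contra! hpos
  have hmin := isLocalMin_of_deriv_deriv_pos hpos hmax.deriv_eq_zero hc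
  have hconst : f =ᶠ[𝓝 x₀] fun _ => f x₀ := (hmin.and hmax).mono fun _ h => le_antisymm h.2 h.1
  have hderiv : deriv f =ᶠ[𝓝 x₀] fun _ => 0 := by simpa using hconst.deriv
  simp [hderiv.deriv_eq] at hpos

section

variable {E : Type*} [NormedAddCommGroup E] [NormedSpace ℝ E]

theorem ContDiffAt.eventually_differentiableAt {g : E → ℝ} {x : E} (hg : ContDiffAt ℝ 2 g x) :
    ∀ᶠ y in 𝓝 x, DifferentiableAt ℝ g y :=
  (hg.eventually (by simp)).mono fun _ hy => hy.differentiableAt (by norm_num)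

theorem ContDiffAt.differentiableAt_fderiv_apply {g : E → ℝ} {x : E} (hg : ContDiffAt ℝ 2 g x)
    (v : E) : DifferentiableAt ℝ (fun y => fderiv ℝ g y v) x :=
  ((hg.fderiv_right (m := 1) (by norm_num)).differentiableAt (by norm_num)).clm_apply
    (differentiableAt_const v)

theorem IsLocalMax.fderiv_fderiv_apply_nonpos {g : E → ℝ} {x : E} (hmax : IsLocalMax g x)
    (hg : ContDiffAt ℝ 2 g x) (v : E) : fderiv ℝ (fun y => fderiv ℝ g y v) x v ≤ 0 := by
  set line : ℝ → E := fun t => x + t • v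
  have hline : ∀ t, HasDerivAt line v t := fun t =>
    (((hasDerivAt_id t).smul_const v).const_add x).congr_deriv (one_smul ℝ v)
  have hline0 : line 0 = x := by simp [line]
  have htendsto : Tendsto line (𝓝 0) (𝓝 x) :=
    hline0 ▸ (hline 0).continuousAt.tendsto
  have hderiv : deriv (g ∘ line) =ᶠ[𝓝 0] fun t => fderiv ℝ g (line t) v := by
    filter_upwards [htendsto.eventually hg.eventually_differentiableAt] with t ht
    exact (ht.hasFDerivAt.comp_hasDerivAt t (hline t)).deriv
  have hsecond : HasDerivAt (fun t => fderiv ℝ g (line t) v)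
      (fderiv ℝ (fun y => fderiv ℝ g y v) x v) 0 :=
    (hg.differentiableAt_fderiv_apply v).hasFDerivAt.comp_hasDerivAt_of_eq 0 (hline 0) hline0.symm
  rw [← hline0] at hmax hg
  rw [← hsecond.deriv, ← hderiv.deriv_eq]
  exact (hmax.comp_continuous (hline 0).continuousAt).deriv_deriv_nonpos
    (hg.continuousAt.comp (hline 0).continuousAt)

end

theorem Metric.exists_isLocalMax_of_lt_on_sphere {X : Type*} [PseudoMetricSpace X] [ProperSpace X]
    {g : X → ℝ} {z : X} {r : ℝ} (hr : 0 ≤ r) (hg : ContinuousOn g (Metric.closedBall z r))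
    (hsphere : ∀ y ∈ Metric.sphere z r, g y < g z) :
    ∃ x ∈ Metric.ball z r, g z ≤ g x ∧ IsLocalMax g x := by
  obtain ⟨x, hx, hmax⟩ := (isCompact_closedBall z r).exists_isMaxOn
    ⟨z, Metric.mem_closedBall_self hr⟩ hg
  have hzx : g z ≤ g x := hmax (Metric.mem_closedBall_self hr)
  have hx_ball : x ∈ Metric.ball z r :=
    (Metric.mem_closedBall.1 hx).lt_of_ne fun h => (hsphere x h).not_ge hzx
  exact ⟨x, hx_ball, hzx,
    (hmax.on_subset Metric.ball_subset_closedBall).isLocalMax (Metric.isOpen_ball.mem_nhds hx_ball)⟩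

theorem Continuous.bddAbove_range_of_le_off_compact {X : Type*} [TopologicalSpace X] {u : X → ℝ}
    (hu : Continuous u) {K : Set X} (hK : IsCompact K) {M : ℝ} (hM : ∀ x ∉ K, u x ≤ M) :
    BddAbove (Set.range u) := by
  obtain ⟨M', hM'⟩ := hK.bddAbove_image hu.continuousOn
  refine ⟨max M M', ?_⟩
  rintro _ ⟨x, rfl⟩
  by_cases hx : x ∈ K
  · exact le_max_of_le_right (hM' ⟨x, hx, rfl⟩)
  · exact le_max_of_le_left (hM x hx)

theorem half_norm_lt_norm_of_mem_ball {E : Type*} [SeminormedAddCommGroup E] {x y : E}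
    (hy : y ∈ Metric.ball x (‖x‖ / 2)) : ‖x‖ / 2 < ‖y‖ ∧ ‖y‖ ≤ 3 / 2 * ‖x‖ := by
  rw [mem_ball_iff_norm] at hy
  have h₁ := norm_sub_norm_le x y
  have h₂ := norm_sub_norm_le y x
  rw [norm_sub_rev x y] at h₁
  constructor <;> linarith

theorem hasDerivAt_one_sub_div_rpow {c t : ℝ} (p : ℝ) (ht : 0 < 1 - t / c) :
    HasDerivAt (fun t => (1 - t / c) ^ p) (-(p / c) * (1 - t / c) ^ (p - 1)) t :=
  ((((hasDerivAt_id' t).div_const c).const_sub 1).rpow_const (Or.inl ht.ne')).congr_deriv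
    (by ring)

theorem eventually_mul_le_mul_rpow {σ ε : ℝ} (hσ : 1 < σ) (hε : 0 < ε) (H : ℝ) :
    ∀ᶠ t in atTop, H * t ≤ ε * t ^ σ := by
  filter_upwards [eventually_gt_atTop 0,
    (tendsto_rpow_atTop (sub_pos.2 hσ)).eventually_ge_atTop (H / ε)] with t ht hHt
  calc H * t = ε * (H / ε) * t := by field_simp
    _ ≤ ε * t ^ (σ - 1) * t := by gcongr
    _ = ε * t ^ σ := by rw [mul_assoc, ← Real.rpow_add_one ht.ne']; ring_nf

theorem exists_forall_ge_half_mul_rpow_add_mul_le {f : ℝ → ℝ} {σ c : ℝ} (hσ : 1 < σ) (hc : 0 < c)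
    (hf : ∀ᶠ t in atTop, c ≤ f t / t ^ σ) (H : ℝ) :
    ∃ T, 0 ≤ T ∧ ∀ t, T ≤ t → c / 2 * t ^ σ + H * t ≤ f t := by
  obtain ⟨T, hT⟩ := eventually_atTop.1 ((hf.and (eventually_mul_le_mul_rpow hσ (half_pos hc) H)).and
    (eventually_gt_atTop 0))
  refine ⟨max T 0, le_max_right _ _, fun t ht => ?_⟩
  obtain ⟨⟨hft, hHt⟩, ht0⟩ := hT t (le_of_max_le_left ht)
  have := (le_div_iff₀ (Real.rpow_pos_of_pos ht0 σ)).1 hft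
  linarith

theorem tendsto_sq_div_atTop {Q : ℝ → ℝ} (hQpos : ∀ t > (0 : ℝ), 0 < Q t)
    (hQo : Q =o[atTop] fun t => t ^ 2) : Tendsto (fun t => t ^ 2 / Q t) atTop atTop := by
  have hpos : ∀ᶠ t in atTop, Q t / t ^ 2 ∈ Set.Ioi 0 := by
    filter_upwards [eventually_gt_atTop 0] with t ht using div_pos (hQpos t ht) (by positivity)
  have hzero := tendsto_nhdsWithin_iff.2 ⟨hQo.tendsto_div_nhds_zero, hpos⟩
  exact hzero.inv_tendsto_nhdsGT_zero.congr fun t => inv_div _ _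

theorem eventually_le_div_mul_sq {Q : ℝ → ℝ} (hQpos : ∀ t > (0 : ℝ), 0 < Q t)
    (hQo : Q =o[atTop] fun t => t ^ 2) {s κ : ℝ} (hs : 0 < s) (hκ : 0 < κ) (C : ℝ) :
    ∀ᶠ r in atTop, C ≤ κ / Q (s * r) * r ^ 2 := by
  have h := ((tendsto_sq_div_atTop hQpos hQo).comp (tendsto_id.const_mul_atTop hs)).const_mul_atTop
    (div_pos hκ (pow_pos hs 2))
  filter_upwards [h.eventually_ge_atTop C] with r hr
  refine hr.trans_eq ?_
  simp only [Function.comp_apply, id]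
  field_simp

theorem mul_le_mul_add_mul_of_max_neg_div_le {κ b a H A F t : ℝ} (hA : 0 ≤ A) (hκb : κ ≤ b)
    (hb : 0 < b) (ha : max (-a) 0 / b ≤ H) (ht : 0 ≤ t) (hF : A + H * t ≤ F) :
    κ * A ≤ b * F + a * t := by
  have haH : -a ≤ H * b := (le_max_left _ _).trans ((div_le_iff₀ hb).1 ha)
  nlinarith [mul_le_mul_of_nonneg_right hκb hA, mul_le_mul_of_nonneg_left hF hb.le,
    mul_nonneg (by linarith : 0 ≤ a + H * b) ht]

section

variable {m : ℕ} {T B R q k σ : ℝ} {z x : EuclideanSpace ℝ (Fin m)}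

local notation "E" => EuclideanSpace ℝ (Fin m)

theorem euclideanLaplacian_sub {u w : E → ℝ} (hu : ContDiffAt ℝ 2 u x)
    (hw : ContDiffAt ℝ 2 w x) :
    euclideanLaplacian (u - w) x = euclideanLaplacian u x - euclideanLaplacian w x := by
  rw [euclideanLaplacian, euclideanLaplacian, euclideanLaplacian, ← Finset.sum_sub_distrib]
  refine Finset.sum_congr rfl fun i _ => ?_
  set e : E := EuclideanSpace.single i 1
  have hfderiv : (fun y => fderiv ℝ (u - w) y e) =ᶠ[𝓝 x]
      (fun y => fderiv ℝ u y e) - (fun y => fderiv ℝ w y e) := by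
    filter_upwards [hu.eventually_differentiableAt, hw.eventually_differentiableAt] with y hu hw
    simp [fderiv_sub hu hw]
  rw [hfderiv.fderiv_eq, fderiv_sub (hu.differentiableAt_fderiv_apply e)
    (hw.differentiableAt_fderiv_apply e)]
  rfl

theorem IsLocalMax.euclideanLaplacian_nonpos {g : E → ℝ} (hmax : IsLocalMax g x)
    (hg : ContDiffAt ℝ 2 g x) : euclideanLaplacian g x ≤ 0 :=
  Finset.sum_nonpos fun _ _ => hmax.fderiv_fderiv_apply_nonpos hg _

theorem euclideanLaplacian_le_of_isLocalMax_sub {u w : E → ℝ} (hu : ContDiffAt ℝ 2 u x)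
    (hw : ContDiffAt ℝ 2 w x) (hmax : IsLocalMax (u - w) x) :
    euclideanLaplacian u x ≤ euclideanLaplacian w x := by
  have := hmax.euclideanLaplacian_nonpos (hu.sub hw)
  rw [euclideanLaplacian_sub hu hw] at this
  linarith

theorem euclideanLaplacian_comp_norm_sub_sq {φ φ' : ℝ → ℝ} {φ'' : ℝ}
    (hφ : ∀ᶠ t in 𝓝 (‖x - z‖ ^ 2), HasDerivAt φ (φ' t) t)
    (hφ' : HasDerivAt φ' φ'' (‖x - z‖ ^ 2)) :
    euclideanLaplacian (fun y => φ (‖y - z‖ ^ 2)) x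
      = 2 * m * φ' (‖x - z‖ ^ 2) + 4 * ‖x - z‖ ^ 2 * φ'' := by
  have hp : ∀ y : E, HasFDerivAt (fun y => ‖y - z‖ ^ 2)
      (2 • (innerSL ℝ (y - z)).comp (ContinuousLinearMap.id ℝ E)) y := fun y =>
    ((hasFDerivAt_id y).sub_const z).norm_sq
  have hfirst : ∀ᶠ y in 𝓝 x, ∀ i, fderiv ℝ (fun y => φ (‖y - z‖ ^ 2)) y
      (EuclideanSpace.single i 1) = φ' (‖y - z‖ ^ 2) * (2 * (y i - z i)) := by
    filter_upwards [(hp x).continuousAt.tendsto.eventually hφ] with y hy i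
    rw [HasFDerivAt.fderiv (f := fun y => φ (‖y - z‖ ^ 2)) (hy.comp_hasFDerivAt y (hp y))]
    simp [EuclideanSpace.inner_single_right]
  have hterm : ∀ i, fderiv ℝ (fun y => fderiv ℝ (fun y => φ (‖y - z‖ ^ 2)) y
      (EuclideanSpace.single i 1)) x (EuclideanSpace.single i 1)
      = 2 * φ' (‖x - z‖ ^ 2) + 4 * (x i - z i) ^ 2 * φ'' := by
    intro i
    have hcoord : HasFDerivAt (fun y : E => 2 * (y i - z i))
        ((2 : ℝ) • (EuclideanSpace.proj i : E →L[ℝ] ℝ)) x :=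
      ((EuclideanSpace.proj (𝕜 := ℝ) i : E →L[ℝ] ℝ).hasFDerivAt.sub_const (z i)).const_mul 2
    have hfirst_i : (fun y => fderiv ℝ (fun y => φ (‖y - z‖ ^ 2)) y (EuclideanSpace.single i 1))
        =ᶠ[𝓝 x] fun y => φ' (‖y - z‖ ^ 2) * (2 * (y i - z i)) :=
      hfirst.mono fun y hy => hy i
    rw [hfirst_i.fderiv_eq,
      HasFDerivAt.fderiv (f := fun y => φ' (‖y - z‖ ^ 2) * (2 * (y i - z i)))
        ((hφ'.comp_hasFDerivAt x (hp x)).mul hcoord)]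
    simp [EuclideanSpace.inner_single_right]
    ring
  rw [euclideanLaplacian, Finset.sum_congr rfl fun i _ => hterm i, Finset.sum_add_distrib,
    EuclideanSpace.real_norm_sq_eq]
  simp only [Finset.sum_const, Finset.card_univ, Fintype.card_fin, nsmul_eq_mul, ← Finset.sum_mul,
    ← Finset.mul_sum, PiLp.sub_apply]
  ring

noncomputable def kellerOssermanBarrier (T B R q : ℝ) (z y : E) : ℝ :=
  T + B * (1 - ‖y - z‖ ^ 2 / R ^ 2) ^ (-q)

theorem one_sub_norm_sub_sq_div_pos (hx : ‖x - z‖ < R) : 0 < 1 - ‖x - z‖ ^ 2 / R ^ 2 := by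
  have hR : 0 < R := (norm_nonneg _).trans_lt hx
  rw [sub_pos, div_lt_one (by positivity)]
  gcongr

theorem contDiffAt_kellerOssermanBarrier (hx : ‖x - z‖ < R) :
    ContDiffAt ℝ 2 (kellerOssermanBarrier T B R q z) x := by
  have hsq : ContDiffAt ℝ 2 (fun y : E => 1 - ‖y - z‖ ^ 2 / R ^ 2) x := by
    have := (contDiff_norm_sq ℝ (n := 2)).contDiffAt.comp x
      ((contDiffAt_id (𝕜 := ℝ) (n := 2)).sub (contDiffAt_const (c := z)))
    exact contDiffAt_const.sub (this.div_const _)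
  exact contDiffAt_const.add
    (contDiffAt_const.mul (hsq.rpow_const_of_ne (one_sub_norm_sub_sq_div_pos hx).ne'))

theorem euclideanLaplacian_kellerOssermanBarrier (hx : ‖x - z‖ < R) :
    euclideanLaplacian (kellerOssermanBarrier T B R q z) x
      = 2 * m * (B * q / R ^ 2 * (1 - ‖x - z‖ ^ 2 / R ^ 2) ^ (-q - 1))
        + 4 * ‖x - z‖ ^ 2 * (B * q * (q + 1) / R ^ 4 * (1 - ‖x - z‖ ^ 2 / R ^ 2) ^ (-q - 2)) := by
  have hR : 0 < R := (norm_nonneg _).trans_lt hx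
  have hopen : IsOpen {t : ℝ | 0 < 1 - t / R ^ 2} := isOpen_lt continuous_const (by fun_prop)
  have hφ : ∀ᶠ t in 𝓝 (‖x - z‖ ^ 2), HasDerivAt (fun t => T + B * (1 - t / R ^ 2) ^ (-q))
      (B * q / R ^ 2 * (1 - t / R ^ 2) ^ (-q - 1)) t := by
    filter_upwards [hopen.mem_nhds (one_sub_norm_sub_sq_div_pos hx)] with t ht
    exact (((hasDerivAt_one_sub_div_rpow (-q) ht).const_mul B).const_add T).congr_deriv (by ring)
  have hφ' : HasDerivAt (fun t => B * q / R ^ 2 * (1 - t / R ^ 2) ^ (-q - 1))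
      (B * q * (q + 1) / R ^ 4 * (1 - ‖x - z‖ ^ 2 / R ^ 2) ^ (-q - 2)) (‖x - z‖ ^ 2) := by
    refine ((hasDerivAt_one_sub_div_rpow (-q - 1) (one_sub_norm_sub_sq_div_pos hx)).const_mul
      (B * q / R ^ 2)).congr_deriv ?_
    rw [show -q - 1 - 1 = -q - 2 by ring]
    field_simp
    ring
  exact euclideanLaplacian_comp_norm_sub_sq hφ hφ'

noncomputable def kellerOssermanConstant (m : ℕ) (σ : ℝ) : ℝ :=
  2 / (σ - 1) * (2 * m + 4 * (2 / (σ - 1)) + 4)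

theorem kellerOssermanConstant_pos (hσ : 1 < σ) : 0 < kellerOssermanConstant m σ := by
  have := sub_pos.2 hσ
  rw [kellerOssermanConstant]
  positivity

theorem pos_of_kellerOssermanConstant_le (hσ : 1 < σ) (hB : 0 < B)
    (hC : kellerOssermanConstant m σ ≤ k * R ^ 2 * B ^ (σ - 1)) : 0 < k :=
  pos_of_mul_pos_left (pos_of_mul_pos_left ((kellerOssermanConstant_pos hσ).trans_le hC)
    (Real.rpow_nonneg hB.le _)) (sq_nonneg R)

theorem euclideanLaplacian_kellerOssermanBarrier_le (hσ : 1 < σ) (hT : 0 ≤ T) (hB : 0 < B)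
    (hC : kellerOssermanConstant m σ ≤ k * R ^ 2 * B ^ (σ - 1)) (hx : ‖x - z‖ < R) :
    euclideanLaplacian (kellerOssermanBarrier T B R (2 / (σ - 1)) z) x
      ≤ k * kellerOssermanBarrier T B R (2 / (σ - 1)) z x ^ σ := by
  have hR : 0 < R := (norm_nonneg _).trans_lt hx
  have hk := pos_of_kellerOssermanConstant_le hσ hB hC
  rw [kellerOssermanConstant] at hC
  set q := 2 / (σ - 1) with hq_def
  have hq : 0 < q := div_pos two_pos (sub_pos.2 hσ)
  have hqσ : -q * σ = -q - 2 := by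
    have : σ - 1 ≠ 0 := (sub_pos.2 hσ).ne'
    rw [hq_def]; field_simp; ring
  set ρ := 1 - ‖x - z‖ ^ 2 / R ^ 2 with hρ_def
  have hρ : 0 < ρ := one_sub_norm_sub_sq_div_pos hx
  have hρ1 : ρ ≤ 1 := by rw [hρ_def]; linarith [div_nonneg (sq_nonneg ‖x - z‖) (sq_nonneg R)]
  have hnorm : ‖x - z‖ ^ 2 = R ^ 2 * (1 - ρ) := by rw [hρ_def]; field_simp; ring
  have hpow : ρ ^ (-q - 1) = ρ ^ (-q - 2) * ρ := by
    rw [← Real.rpow_add_one hρ.ne']; ring_nf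
  rw [euclideanLaplacian_kellerOssermanBarrier hx]
  calc 2 * m * (B * q / R ^ 2 * ρ ^ (-q - 1))
        + 4 * ‖x - z‖ ^ 2 * (B * q * (q + 1) / R ^ 4 * ρ ^ (-q - 2))
      = B * q / R ^ 2 * ρ ^ (-q - 2) * (2 * m * ρ + 4 * (q + 1) * (1 - ρ)) := by
        rw [hpow, hnorm]; field_simp
    _ ≤ B * q / R ^ 2 * ρ ^ (-q - 2) * (2 * m + 4 * q + 4) := by
        refine mul_le_mul_of_nonneg_left ?_ (by positivity)
        nlinarith [(Nat.cast_nonneg m : (0 : ℝ) ≤ m)]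
    _ = B * (q * (2 * m + 4 * q + 4)) / R ^ 2 * ρ ^ (-q - 2) := by ring
    _ ≤ B * (k * R ^ 2 * B ^ (σ - 1)) / R ^ 2 * ρ ^ (-q - 2) := by gcongr
    _ = k * (B * ρ ^ (-q)) ^ σ := by
        rw [Real.mul_rpow hB.le (Real.rpow_nonneg hρ.le _), ← Real.rpow_mul hρ.le, hqσ,
          show B ^ σ = B ^ (σ - 1) * B by rw [← Real.rpow_add_one hB.ne']; ring_nf]
        field_simp
    _ ≤ k * kellerOssermanBarrier T B R q z x ^ σ := by
        unfold kellerOssermanBarrier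
        gcongr
        linarith

theorem exists_lt_kellerOssermanBarrier_on_sphere (hR : 0 < R) (hB : 0 < B) (hq : 0 < q) (N : ℝ) :
    ∃ r, 0 ≤ r ∧ r < R ∧ ∀ y ∈ Metric.sphere z r, N < kellerOssermanBarrier T B R q z y := by
  have hgap : Tendsto (fun r : ℝ => 1 - r ^ 2 / R ^ 2) (𝓝[<] R)
      (𝓝[>] 0) := by
    refine tendsto_nhdsWithin_iff.2 ⟨?_, ?_⟩
    · have h : Tendsto (fun r : ℝ => 1 - r ^ 2 / R ^ 2) (𝓝 R) (𝓝 (1 - R ^ 2 / R ^ 2)) :=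
        (by fun_prop : Continuous fun r : ℝ => 1 - r ^ 2 / R ^ 2).tendsto R
      rw [div_self (by positivity), sub_self] at h
      exact h.mono_left nhdsWithin_le_nhds
    · filter_upwards [Ioo_mem_nhdsLT hR] with r hr
      have : r ^ 2 < R ^ 2 := by nlinarith [hr.1, hr.2]
      simp only [Set.mem_Ioi, sub_pos]
      rwa [div_lt_one (by positivity)]
  have hblowup : Tendsto (fun r : ℝ => T + B * (1 - r ^ 2 / R ^ 2) ^ (-q))
      (𝓝[<] R) atTop :=
    tendsto_atTop_add_const_left _ T
      (((tendsto_rpow_neg_nhdsGT_zero (neg_neg_of_pos hq)).comp hgap).const_mul_atTop hB)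
  obtain ⟨r, hN, hr⟩ := ((hblowup.eventually_gt_atTop N).and (Ioo_mem_nhdsLT hR)).exists
  refine ⟨r, hr.1.le, hr.2, fun y hy => ?_⟩
  rw [mem_sphere_iff_norm] at hy
  simpa [kellerOssermanBarrier, hy] using hN

theorem le_add_of_rpow_le_euclideanLaplacian (hσ : 1 < σ) (hT : 0 ≤ T) (hB : 0 < B) (hR : 0 < R)
    (hC : kellerOssermanConstant m σ ≤ k * R ^ 2 * B ^ (σ - 1))
    {u : E → ℝ} (hu : ContDiff ℝ 2 u)
    (hΔ : ∀ y ∈ Metric.ball z R, T ≤ u y → k * u y ^ σ ≤ euclideanLaplacian u y) :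
    u z ≤ T + B := by
  set q := 2 / (σ - 1)
  have hq : 0 < q := div_pos two_pos (sub_pos.2 hσ)
  set w := kellerOssermanBarrier T B R q z
  have hwz : w z = T + B := by simp [w, kellerOssermanBarrier]
  by_contra! hlt
  obtain ⟨M, hM⟩ := (isCompact_closedBall z R).bddAbove_image hu.continuous.continuousOn
  obtain ⟨r, hr, hrR, hw_sphere⟩ :=
    exists_lt_kellerOssermanBarrier_on_sphere (T := T) (z := z) hR hB hq (M - u z + w z)
  have hnorm_lt : ∀ y ∈ Metric.closedBall z r, ‖y - z‖ < R := fun y hy =>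
    (mem_closedBall_iff_norm.1 hy).trans_lt hrR
  obtain ⟨x, hx, hzx, hmax⟩ := Metric.exists_isLocalMax_of_lt_on_sphere (g := u - w) hr
    (fun y hy => (hu.continuous.continuousAt.sub
      (contDiffAt_kellerOssermanBarrier (hnorm_lt y hy)).continuousAt).continuousWithinAt)
    (fun y hy => by
      have huy : u y ≤ M := hM ⟨y,
        Metric.closedBall_subset_closedBall hrR.le (Metric.sphere_subset_closedBall hy), rfl⟩
      have := hw_sphere y hy
      simp only [Pi.sub_apply]
      linarith)
  have hxR : ‖x - z‖ < R := hnorm_lt x (Metric.ball_subset_closedBall hx)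
  have hTw : T ≤ w x := le_add_of_nonneg_right
    (mul_nonneg hB.le (Real.rpow_nonneg (one_sub_norm_sub_sq_div_pos hxR).le _))
  have hwu : w x < u x := by
    simp only [Pi.sub_apply] at hzx
    linarith
  have hΔu := hΔ x (mem_ball_iff_norm.2 hxR) (hTw.trans hwu.le)
  have hΔw := euclideanLaplacian_kellerOssermanBarrier_le hσ hT hB hC hxR
  have hcompare := euclideanLaplacian_le_of_isLocalMax_sub hu.contDiffAt
    (contDiffAt_kellerOssermanBarrier hxR) hmax
  have : k * w x ^ σ < k * u x ^ σ := by
    have := pos_of_kellerOssermanConstant_le hσ hB hC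
    gcongr
    · exact hT.trans hTw
  linarith

end

theorem stmt8_general {m : ℕ} (σ H : ℝ) (hσ : 1 < σ)
    (Q : ℝ → ℝ)
    (hQpos : ∀ t > (0:ℝ), 0 < Q t)
    (hQmono : ∀ s t : ℝ, 0 < s → s ≤ t → Q s ≤ Q t)
    (hQo : Q =o[atTop] fun t => t ^ 2)
    (a b : EuclideanSpace ℝ (Fin m) → ℝ)
    (hbQ : ∀ x : EuclideanSpace ℝ (Fin m), 0 < ‖x‖ → 1 / Q ‖x‖ ≤ b x)
    (haH : ∀ x, max (-a x) 0 / b x ≤ H)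
    (f : ℝ → ℝ)
    (hfliminf : ∃ c > (0:ℝ), ∀ᶠ t in atTop, c ≤ f t / t ^ σ)
    (u : EuclideanSpace ℝ (Fin m) → ℝ) (hu : ContDiff ℝ 2 u)
    (hineq : ∀ x, b x * f (u x) + a x * u x ≤ euclideanLaplacian u x) :
    BddAbove (Set.range u) := by
  obtain ⟨c, hc, hfc⟩ := hfliminf
  obtain ⟨T, hT, hfT⟩ := exists_forall_ge_half_mul_rpow_add_mul_le hσ hc hfc H
  have hΔ : ∀ ρ y, 0 < ‖y‖ → ‖y‖ ≤ ρ → T ≤ u y →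
      c / 2 / Q ρ * u y ^ σ ≤ euclideanLaplacian u y := fun ρ y hy hyρ hTy =>
    calc c / 2 / Q ρ * u y ^ σ = 1 / Q ρ * (c / 2 * u y ^ σ) := by ring
      _ ≤ b y * f (u y) + a y * u y := by
        have hQ := hQpos _ hy
        refine mul_le_mul_add_mul_of_max_neg_div_le
          (mul_nonneg (half_pos hc).le (Real.rpow_nonneg (hT.trans hTy) σ))
          ((one_div_le_one_div_of_le hQ (hQmono _ _ hy hyρ)).trans (hbQ y hy))
          ((one_div_pos.2 hQ).trans_le (hbQ y hy)) (haH y) (hT.trans hTy) (hfT _ hTy)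
      _ ≤ euclideanLaplacian u y := hineq y
  obtain ⟨r₀, hr₀⟩ := eventually_atTop.1 ((eventually_le_div_mul_sq hQpos hQo
    (by norm_num : (0 : ℝ) < 3 / 2) (by positivity : 0 < c / 8) (kellerOssermanConstant m σ)).and
    (eventually_gt_atTop 0))
  refine hu.continuous.bddAbove_range_of_le_off_compact (isCompact_closedBall 0 r₀)
    (M := T + 1) fun x hx => ?_
  obtain ⟨hC, hx0⟩ := hr₀ ‖x‖ (by simpa using hx : r₀ < ‖x‖).le
  refine le_add_of_rpow_le_euclideanLaplacian (k := c / 2 / Q (3 / 2 * ‖x‖)) hσ hT one_pos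
    (half_pos hx0) (hC.trans_eq (by rw [Real.one_rpow]; ring)) hu fun y hy hTy => ?_
  obtain ⟨hy₁, hy₂⟩ := half_norm_lt_norm_of_mem_ball hy
  exact hΔ _ y ((half_pos hx0).trans hy₁) hy₂ hTy

theorem stmt8 {m : ℕ} (hm : 2 ≤ m) (σ H : ℝ) (hσ : 1 < σ) (hH : 0 < H)
    (Q : ℝ → ℝ)
    (hQpos : ∀ t > (0:ℝ), 0 < Q t)
    (hQmono : ∀ s t : ℝ, 0 < s → s ≤ t → Q s ≤ Q t)
    (hQo : Q =o[atTop] fun t => t ^ 2)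
    (hliminf : ∃ C : ℝ, ∃ᶠ r in atTop, Q r * Real.log r / r ^ 2 ≤ C)
    (a b : EuclideanSpace ℝ (Fin m) → ℝ) (ha : Continuous a) (hb : Continuous b)
    (hbQ : ∀ x : EuclideanSpace ℝ (Fin m), 0 < ‖x‖ → 1 / Q ‖x‖ ≤ b x)
    (haminus : ∃ C : ℝ, ∀ x, max (-a x) 0 ≤ C)
    (haH : ∀ x, max (-a x) 0 / b x ≤ H)
    (f : ℝ → ℝ) (hf : Continuous f)
    (hfliminf : ∃ c > (0:ℝ), ∀ᶠ t in atTop, c ≤ f t / t ^ σ)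
    (u : EuclideanSpace ℝ (Fin m) → ℝ) (hu : ContDiff ℝ 2 u)
    (hupos : ∀ x, 0 ≤ u x)
    (hineq : ∀ x, b x * f (u x) + a x * u x ≤ euclideanLaplacian u x) :
    BddAbove (Set.range u) :=
  stmt8_general σ H hσ Q hQpos hQmono hQo a b hbQ haH f hfliminf u hu hineq
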